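/- Let α₁,…,αₘ ∈ ℚ^k be rational vectors and Δ their convex hull. Then max over i of ⟨ξ, αᵢ⟩ ≥ 0 for every ξ ∈ ℤ^k if and only if 0 ∈ Δ. (Hilbert–Mumford criterion for semistability under a torus action, convex-geometric form.) -/

import Mathlib

/-!
If `0` lies in the convex hull of the `αᵢ`, no linear functional can be negative on all of
them, since the open half-space where it is negative is convex. Conversely, if `0` is not in
the (closed, convex) hull, Hahn–Banach separation gives a real `w` with `⟨w, αᵢ⟩ < 0` for
all `i`. These finitely many strict inequalities cut out an open set, which therefore contains
a rational point; clearing denominators turns it into an integral one.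
-/

open Set

section

variable {ι n : Type*} [Fintype n]

theorem exists_dotProduct_nonneg_of_zero_mem_convexHull {v : ι → n → ℝ}
    (h : 0 ∈ convexHull ℝ (range v)) (w : n → ℝ) : ∃ i, 0 ≤ w ⬝ᵥ v i := by
  by_contra! hneg
  have hconv : Convex ℝ {x : n → ℝ | w ⬝ᵥ x < 0} :=
    convex_halfSpace_lt ⟨dotProduct_add w, fun c x => dotProduct_smul c w x⟩ 0
  have := convexHull_min (range_subset_iff.2 hneg) hconv h
  simp at this

theorem LinearMap.exists_eq_dotProduct {R : Type*} [CommSemiring R] (f : (n → R) →ₗ[R] R) :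
    ∃ w : n → R, ∀ x, f x = w ⬝ᵥ x := by
  classical
  exact ⟨fun i => f fun j => if i = j then 1 else 0,
    fun x => by rw [f.pi_apply_eq_sum_univ x, dotProduct_comm]; rfl⟩

theorem exists_dotProduct_neg_of_zero_notMem_convexHull [Finite ι] {v : ι → n → ℝ}
    (h : 0 ∉ convexHull ℝ (range v)) : ∃ w : n → ℝ, ∀ i, w ⬝ᵥ v i < 0 := by
  obtain ⟨f, u, hu, hf⟩ := geometric_hahn_banach_point_closed (convex_convexHull ℝ _)
    ((finite_range v).isClosed_convexHull (𝕜 := ℝ)) h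
  obtain ⟨w, hw⟩ := (f : (n → ℝ) →ₗ[ℝ] ℝ).exists_eq_dotProduct
  refine ⟨-w, fun i => ?_⟩
  rw [map_zero] at hu
  rw [neg_dotProduct, neg_neg_iff_pos, ← hw]
  exact hu.trans (hf (v i) (subset_convexHull ℝ _ (mem_range_self i)))

theorem exists_ratCast_dotProduct_neg [Finite ι] {v : ι → n → ℝ}
    (h : ∃ w : n → ℝ, ∀ i, w ⬝ᵥ v i < 0) : ∃ q : n → ℚ, ∀ i, (Rat.cast ∘ q) ⬝ᵥ v i < 0 := by
  have hopen : IsOpen {w : n → ℝ | ∀ i, w ⬝ᵥ v i < 0} := by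
    simp only [ofPred_forall]
    exact isOpen_iInter_of_finite fun i => isOpen_lt (by fun_prop) continuous_const
  exact (DenseRange.piMap fun _ => Rat.denseRange_cast).exists_mem_open hopen h

theorem Rat.exists_pos_nat_mul_eq_intCast (q : n → ℚ) :
    ∃ N : ℕ, 0 < N ∧ ∃ z : n → ℤ, ∀ j, (N : ℚ) * q j = z j := by
  refine ⟨∏ j, (q j).den, Finset.prod_pos fun j _ => (q j).den_pos, ?_⟩
  have hdvd (j : n) : ∃ z : ℤ, ((∏ j, (q j).den : ℕ) : ℚ) * q j = z := by
    obtain ⟨c, hc⟩ := Finset.dvd_prod_of_mem (fun j => (q j).den) (Finset.mem_univ j)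
    refine ⟨c * (q j).num, ?_⟩
    rw [hc, Nat.cast_mul, mul_comm, ← mul_assoc, Rat.mul_den_eq_num]
    push_cast; ring
  choose z hz using hdvd
  exact ⟨z, hz⟩

theorem exists_intCast_dotProduct_neg [Finite ι] {v : ι → n → ℝ}
    (h : ∃ w : n → ℝ, ∀ i, w ⬝ᵥ v i < 0) : ∃ z : n → ℤ, ∀ i, (Int.cast ∘ z) ⬝ᵥ v i < 0 := by
  obtain ⟨q, hq⟩ := exists_ratCast_dotProduct_neg h
  obtain ⟨N, hN, z, hz⟩ := Rat.exists_pos_nat_mul_eq_intCast q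
  refine ⟨z, fun i => ?_⟩
  have : (Int.cast ∘ z : n → ℝ) = (N : ℝ) • (Rat.cast ∘ q) := by
    ext j
    simp only [Function.comp_apply, Pi.smul_apply, smul_eq_mul]
    exact_mod_cast (hz j).symm
  rw [this, smul_dotProduct, smul_eq_mul]
  exact mul_neg_of_pos_of_neg (by exact_mod_cast hN) (hq i)

theorem zero_mem_convexHull_iff_forall_exists_intCast_dotProduct_nonneg [Finite ι]
    (v : ι → n → ℝ) :
    0 ∈ convexHull ℝ (range v) ↔ ∀ z : n → ℤ, ∃ i, 0 ≤ (Int.cast ∘ z) ⬝ᵥ v i := by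
  refine ⟨fun h z => exists_dotProduct_nonneg_of_zero_mem_convexHull h _, fun h => ?_⟩
  by_contra h0
  obtain ⟨z, hz⟩ :=
    exists_intCast_dotProduct_neg (exists_dotProduct_neg_of_zero_notMem_convexHull h0)
  obtain ⟨i, hi⟩ := h z
  exact (hz i).not_ge hi

end

theorem stmt_8 (k m : ℕ) (hm : 0 < m) (α : Fin m → Fin k → ℚ) :
    (∀ ξ : Fin k → ℤ,
        0 ≤ Finset.univ.sup' ⟨⟨0, hm⟩, Finset.mem_univ _⟩
          (fun i => ∑ j, (ξ j : ℝ) * (α i j : ℝ))) ↔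
      (0 : Fin k → ℝ) ∈ convexHull ℝ (Set.range fun i j => (α i j : ℝ)) := by
  rw [zero_mem_convexHull_iff_forall_exists_intCast_dotProduct_nonneg]
  exact forall_congr' fun ξ => (Finset.le_sup'_iff _).trans (by simp [dotProduct])
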